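/- Let V be a finite-dimensional real normed vector space, and let G be the subgroup of the additive group of functions V → ℤ generated by the indicator functions 1_X of nonempty compact convex subsets X ⊆ V. Then there exists a unique group homomorphism ∫ : G → ℤ such that ∫(1_X) = 1 for every nonempty compact convex subset X ⊆ V. -/

import Mathlib

/-!
The integral is the sum of coefficients: the indicators generate the group, so everything reduces
to showing that a relation `∑ cᵢ 1_{Xᵢ} = 0` among compact convex sets forces the coefficients of
the nonempty `Xᵢ` to sum to zero. On `ℝ` a nonempty compact convex set is an interval `[a, b]`,
and comparing the relation at `β` with the relation just to the right of `β` shows that the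
coefficients of the intervals with right endpoint `β` sum to zero. On `V × W` the fibres over
`v ∈ V` are compact convex and nonempty exactly when `v` lies in the projection, so the statement
for `W` turns the relation into one among the projections to `V`. Induction on the dimension
finishes the argument.
-/

def eulerGroup (V : Type*) [NormedAddCommGroup V] [NormedSpace ℝ V] : AddSubgroup (V → ℤ) :=
  AddSubgroup.closure
    {f : V → ℤ | ∃ X : Set V, X.Nonempty ∧ IsCompact X ∧ Convex ℝ X ∧ f = X.indicator 1}

open Set Filter Topology

universe u

-- The Euler characteristic of a compact convex set, which is either empty or contractible.
open scoped Classical in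
noncomputable def eulerChar {V : Type*} (X : Set V) : ℤ := if X.Nonempty then 1 else 0

lemma eulerChar_of_nonempty {V : Type*} {X : Set V} (hX : X.Nonempty) : eulerChar X = 1 :=
  if_pos hX

lemma eulerChar_image {V W : Type*} (f : V → W) (X : Set V) :
    eulerChar (f '' X) = eulerChar X := by
  classical
  exact if_congr image_nonempty rfl rfl

lemma eulerChar_preimage_of_surjective {V W : Type*} {f : V → W} (hf : f.Surjective)
    (X : Set W) : eulerChar (f ⁻¹' X) = eulerChar X := by
  classical
  exact if_congr hf.nonempty_preimage rfl rfl

lemma eulerChar_preimage_prodMk {V W : Type*} (X : Set (V × W)) (v : V) :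
    eulerChar (Prod.mk v ⁻¹' X) = (Prod.fst '' X).indicator 1 v := by
  by_cases h : v ∈ Prod.fst '' X
  · obtain ⟨⟨v, w⟩, hvw, rfl⟩ := h
    rw [indicator_of_mem (mem_image_of_mem _ hvw), eulerChar_of_nonempty ⟨w, hvw⟩, Pi.one_apply]
  · rw [indicator_of_notMem h, eulerChar, if_neg]
    rintro ⟨w, hw⟩
    exact h ⟨(v, w), hw, rfl⟩

def EulerCharWellDefined (V : Type*) [TopologicalSpace V] [AddCommGroup V] [Module ℝ V] : Prop :=
  ∀ (ι : Type u) [Fintype ι] (c : ι → ℤ) (X : ι → Set V),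
    (∀ i, IsCompact (X i)) → (∀ i, Convex ℝ (X i)) →
    (∀ x, ∑ i, c i * (X i).indicator 1 x = 0) → ∑ i, c i * eulerChar (X i) = 0

namespace EulerCharWellDefined

variable {V W : Type*} [TopologicalSpace V] [AddCommGroup V] [Module ℝ V]
  [TopologicalSpace W] [AddCommGroup W] [Module ℝ W]

lemma of_subsingleton [Subsingleton V] : EulerCharWellDefined.{u} V := by
  intro ι _ c X _ _ h
  have hX : ∀ i, eulerChar (X i) = (X i).indicator 1 0 := fun i => by
    by_cases h0 : (0 : V) ∈ X i
    · rw [indicator_of_mem h0, eulerChar_of_nonempty ⟨0, h0⟩, Pi.one_apply]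
    · rw [indicator_of_notMem h0, eulerChar, if_neg]
      rintro ⟨x, hx⟩
      exact h0 (Subsingleton.elim x 0 ▸ hx)
  simpa only [hX] using h 0

lemma congr (h : EulerCharWellDefined.{u} V) (e : V ≃L[ℝ] W) : EulerCharWellDefined.{u} W := by
  intro ι _ c X hcomp hconv hsum
  simp only [← eulerChar_preimage_of_surjective e.surjective]
  refine h ι c (fun i => e ⁻¹' X i) (fun i => e.toHomeomorph.isCompact_preimage.2 (hcomp i))
    (fun i => (hconv i).linear_preimage (e : V →ₗ[ℝ] W)) fun v => ?_
  convert hsum (e v) using 3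
  exact indicator_comp_right (g := (1 : W → ℤ)) e

lemma prod [T1Space V] (hV : EulerCharWellDefined.{u} V) (hW : EulerCharWellDefined.{u} W) :
    EulerCharWellDefined.{u} (V × W) := by
  intro ι _ c X hcomp hconv hsum
  simp only [← eulerChar_image Prod.fst]
  refine hV ι c _ (fun i => (hcomp i).image continuous_fst)
    (fun i => (hconv i).linear_image (LinearMap.fst ℝ V W)) fun v => ?_
  simp only [← eulerChar_preimage_prodMk]
  refine hW ι c _ (fun i => ?_) (fun i => ?_) fun w => hsum (v, w)
  · have hfiber : Prod.mk v ⁻¹' X i = Prod.snd '' (X i ∩ Prod.fst ⁻¹' {v}) := by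
      ext w
      constructor
      · exact fun hw => ⟨(v, w), ⟨hw, rfl⟩, rfl⟩
      · rintro ⟨⟨v', w⟩, ⟨hw, rfl : v' = v⟩, rfl⟩
        exact hw
    rw [hfiber]
    exact ((hcomp i).inter_right (isClosed_singleton.preimage continuous_fst)).image
      continuous_snd
  · intro w₁ h₁ w₂ h₂ a b ha hb hab
    have := hconv i h₁ h₂ ha hb hab
    rwa [Prod.smul_mk, Prod.smul_mk, Prod.mk_add_mk, Convex.combo_self hab] at this

end EulerCharWellDefined

lemma eventually_indicator_Icc_sub_nhdsGT {a b : ℝ} (hab : a ≤ b) (β : ℝ) :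
    ∀ᶠ t in 𝓝[>] β, (Icc a b).indicator (1 : ℝ → ℤ) β - (Icc a b).indicator 1 t =
      if β = b then 1 else 0 := by
  have hnear : ∀ y, ∀ᶠ t in 𝓝[>] β, β < y → t < y := fun y => by
    by_cases hy : β < y
    · exact ((eventually_lt_nhds hy).filter_mono nhdsWithin_le_nhds).mono fun _ ht _ => ht
    · exact Eventually.of_forall fun _ h => absurd h hy
  filter_upwards [self_mem_nhdsWithin, hnear a, hnear b] with t (hβt : β < t) hta htb
  have hta' : a ≤ t ↔ a ≤ β := ⟨fun h => not_lt.1 fun h' => (hta h').not_ge h, (·.trans hβt.le)⟩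
  have htb' : t ≤ b ↔ β < b := ⟨hβt.trans_le, fun h => (htb h).le⟩
  simp only [indicator_apply, mem_Icc, hta', htb', Pi.one_apply]
  rcases eq_or_ne β b with rfl | hβb
  · simp [hab]
  · simp [hβb, hβb.le_iff_lt]

open scoped Classical in
lemma IsCompact.eventually_indicator_sub_nhdsGT {S : Set ℝ} (hS : IsCompact S)
    (hconv : Convex ℝ S) (β : ℝ) :
    ∀ᶠ t in 𝓝[>] β, S.indicator (1 : ℝ → ℤ) β - S.indicator 1 t =
      if IsGreatest S β then 1 else 0 := by
  rcases S.eq_empty_or_nonempty with rfl | hne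
  · simp [IsGreatest]
  obtain ⟨a, b, hab, rfl⟩ : ∃ a b, a ≤ b ∧ S = Icc a b :=
    ⟨_, _, csInf_le_csSup hne hS.bddBelow hS.bddAbove,
      eq_Icc_of_connected_compact ⟨hne, hconv.isPreconnected⟩ hS⟩
  have hgreatest : IsGreatest (Icc a b) β ↔ β = b :=
    ⟨fun h => h.unique (isGreatest_Icc hab), by rintro rfl; exact isGreatest_Icc hab⟩
  simpa only [hgreatest] using eventually_indicator_Icc_sub_nhdsGT hab β

open scoped Classical in
lemma IsCompact.eulerChar_eq_sum_isGreatest {S : Set ℝ} (hS : IsCompact S) {B : Finset ℝ}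
    (hB : sSup S ∈ B) : eulerChar S = ∑ β ∈ B, if IsGreatest S β then 1 else 0 := by
  rcases S.eq_empty_or_nonempty with rfl | hne
  · simp [eulerChar, IsGreatest]
  have hgreatest : ∀ β, IsGreatest S β ↔ sSup S = β := fun β =>
    ⟨IsGreatest.csSup_eq, fun h => h ▸ hS.isGreatest_sSup hne⟩
  simp only [hgreatest, Finset.sum_ite_eq, hB, if_true, eulerChar_of_nonempty hne]

open scoped Classical in
theorem eulerCharWellDefined_real : EulerCharWellDefined.{u} ℝ := by
  intro ι _ c S hS hconv hsum
  have hendpoint : ∀ β, ∑ i, c i * (if IsGreatest (S i) β then 1 else 0) = 0 := fun β => by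
    obtain ⟨t, ht⟩ := (eventually_all.2 fun i =>
      (hS i).eventually_indicator_sub_nhdsGT (hconv i) β).exists
    simp only [← ht, mul_sub, Finset.sum_sub_distrib, hsum, sub_zero]
  let B := Finset.univ.image fun i => sSup (S i)
  calc ∑ i, c i * eulerChar (S i)
      = ∑ i, c i * ∑ β ∈ B, (if IsGreatest (S i) β then 1 else 0) := by
        refine Finset.sum_congr rfl fun i _ => congrArg (c i * ·) ?_
        exact (hS i).eulerChar_eq_sum_isGreatest (Finset.mem_image_of_mem _ (Finset.mem_univ i))
    _ = ∑ β ∈ B, ∑ i, c i * (if IsGreatest (S i) β then 1 else 0) := by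
        simp only [Finset.mul_sum]
        exact Finset.sum_comm
    _ = 0 := Finset.sum_eq_zero fun β _ => hendpoint β

theorem eulerCharWellDefined_pi_fin (n : ℕ) : EulerCharWellDefined.{u} (Fin n → ℝ) := by
  induction n with
  | zero => exact .of_subsingleton
  | succ n ih =>
    exact (ih.prod eulerCharWellDefined_real).congr
      (ContinuousLinearEquiv.ofFinrankEq (by simp)).symm

theorem eulerCharWellDefined_of_finiteDimensional (V : Type*) [NormedAddCommGroup V]
    [NormedSpace ℝ V] [FiniteDimensional ℝ V] : EulerCharWellDefined.{u} V :=
  (eulerCharWellDefined_pi_fin (Module.finrank ℝ V)).congr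
    (ContinuousLinearEquiv.ofFinrankEq (by simp))

section EulerGroup

variable (V : Type*) [NormedAddCommGroup V] [NormedSpace ℝ V]

lemma indicator_mem_eulerGroup {X : Set V} (hne : X.Nonempty) (hcomp : IsCompact X)
    (hconv : Convex ℝ X) : X.indicator 1 ∈ eulerGroup V :=
  AddSubgroup.subset_closure ⟨X, hne, hcomp, hconv, rfl⟩

noncomputable def indicatorCombination : (ConvexBody V →₀ ℤ) →ₗ[ℤ] (V → ℤ) :=
  Finsupp.linearCombination ℤ fun K => (K : Set V).indicator 1

lemma eulerGroup_eq_range_indicatorCombination :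
    eulerGroup V = (LinearMap.range (indicatorCombination V)).toAddSubgroup := by
  rw [indicatorCombination, Finsupp.range_linearCombination,
    Submodule.span_int_eq_addSubgroupClosure, eulerGroup]
  congr 1
  ext f
  constructor
  · rintro ⟨X, hne, hcomp, hconv, rfl⟩
    exact ⟨⟨X, hconv, hcomp, hne⟩, rfl⟩
  · rintro ⟨K, rfl⟩
    exact ⟨K, K.nonempty, K.isCompact, K.convex, rfl⟩

noncomputable def toEulerGroup : (ConvexBody V →₀ ℤ) →+ eulerGroup V :=
  (indicatorCombination V).toAddMonoidHom.codRestrict _ fun c => by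
    rw [eulerGroup_eq_range_indicatorCombination]
    exact ⟨c, rfl⟩

lemma toEulerGroup_surjective : Function.Surjective (toEulerGroup V) := by
  rintro ⟨f, hf⟩
  rw [eulerGroup_eq_range_indicatorCombination] at hf
  obtain ⟨c, rfl⟩ := hf
  exact ⟨c, rfl⟩

lemma toEulerGroup_single_one (K : ConvexBody V) :
    toEulerGroup V (Finsupp.single K 1) =
      ⟨(K : Set V).indicator 1, indicator_mem_eulerGroup V K.nonempty K.isCompact K.convex⟩ :=
  Subtype.ext (by simp [toEulerGroup, indicatorCombination])

lemma ker_toEulerGroup_le_ker_degree [FiniteDimensional ℝ V] :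
    (toEulerGroup V).ker ≤ (Finsupp.degree : (ConvexBody V →₀ ℤ) →+ ℤ).ker := by
  intro c hc
  have hc' : ∑ K ∈ c.support, c K • (K : Set V).indicator (1 : V → ℤ) = 0 := by
    simpa [toEulerGroup, indicatorCombination, Finsupp.linearCombination_apply, Finsupp.sum]
      using congrArg Subtype.val hc
  have key := eulerCharWellDefined_of_finiteDimensional V c.support (fun K => c K)
    (fun K => (K : Set V)) (fun K => K.1.isCompact) (fun K => K.1.convex)
    fun v => by simpa [Finset.sum_attach c.support fun K => c K * (K : Set V).indicator 1 v]
      using congrFun hc' v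
  simpa [eulerChar_of_nonempty, ConvexBody.nonempty, Finset.sum_attach c.support c,
    Finsupp.degree_apply] using key

lemma comp_toEulerGroup_eq_degree_iff (J : eulerGroup V →+ ℤ) :
    J.comp (toEulerGroup V) = Finsupp.degree ↔
      ∀ (X : Set V), X.Nonempty → IsCompact X → Convex ℝ X →
        ∀ hmem : (X.indicator 1 : V → ℤ) ∈ eulerGroup V, J ⟨X.indicator 1, hmem⟩ = 1 := by
  constructor
  · intro hJ X hne hcomp hconv hmem
    have h := DFunLike.congr_fun hJ (Finsupp.single ⟨X, hconv, hcomp, hne⟩ 1)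
    rwa [AddMonoidHom.comp_apply, toEulerGroup_single_one, Finsupp.degree_single] at h
  · intro hJ
    refine Finsupp.addHom_ext' fun K => AddMonoidHom.ext_int ?_
    simp [toEulerGroup_single_one, hJ _ K.nonempty K.isCompact K.convex]

end EulerGroup

/-- **Existence and uniqueness of the Euler integral.**
There is a unique group homomorphism from the subgroup of `V → ℤ` generated by
indicators of nonempty compact convex sets to `ℤ` sending each such indicator to `1`. -/
theorem euler_integral_exists_unique
    (V : Type*) [NormedAddCommGroup V] [NormedSpace ℝ V] [FiniteDimensional ℝ V] :
    ∃! I : eulerGroup V →+ ℤ,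
      ∀ (X : Set V), X.Nonempty → IsCompact X → Convex ℝ X →
        ∀ hmem : (X.indicator 1 : V → ℤ) ∈ eulerGroup V,
          I ⟨X.indicator 1, hmem⟩ = 1 := by
  simp only [← comp_toEulerGroup_eq_degree_iff]
  have hsurj := toEulerGroup_surjective V
  let I := (toEulerGroup V).liftOfSurjective hsurj
    ⟨Finsupp.degree, ker_toEulerGroup_le_ker_degree V⟩
  have hI : I.comp (toEulerGroup V) = Finsupp.degree :=
    AddMonoidHom.liftOfRightInverse_comp _ _ _ _
  exact ⟨I, hI, fun J hJ => (AddMonoidHom.cancel_right hsurj).1 (hJ.trans hI.symm)⟩
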